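/- arXiv:2112.07994 — 3 statements merged into one kernel-verified Lean document; each statement's English description precedes it below -/
import Mathlib

section
/- If f is entire of exponential type at most κ and its restriction to ℝ is bounded with sup norm M, then |f(z)| ≤ M e^{κ|Im z|} for every z ∈ ℂ (Phragmén–Lindelöf for Bernstein functions). -/
open Complex Filter Set

lemma aux_upper (f : ℂ → ℂ) (hf : Differentiable ℂ f) (κ M : ℝ)
    (htype : ∀ ε > (0 : ℝ), ∃ C > (0 : ℝ), ∀ w : ℂ, ‖f w‖ ≤ C * Real.exp ((κ + ε) * ‖w‖))
    (hbd : ∀ x : ℝ, ‖f (x : ℂ)‖ ≤ M) (z : ℂ) (hz : 0 ≤ z.im) :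
    ‖f z‖ ≤ M * Real.exp (κ * z.im) := by
  have key : ∀ ε > (0 : ℝ), ‖f z‖ ≤ M * Real.exp ((κ + ε) * z.im) := by
    intro ε hε
    obtain ⟨C, hC, hCb⟩ := htype ε hε
    set F : ℂ → ℂ := fun w => Complex.exp (I * (κ + ε) * (I * w)) * f (I * w) with hF
    have hFn : ∀ w : ℂ, ‖F w‖ = Real.exp (-(κ + ε) * w.re) * ‖f (I * w)‖ := by
      intro w
      rw [hF]
      simp only [norm_mul, Complex.norm_exp]
      congr 2
      have : I * (↑κ + ↑ε) * (I * w) = -((κ + ε : ℝ) : ℂ) * w := by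
        push_cast; ring_nf; rw [Complex.I_sq]; ring
      rw [this]
      simp [Complex.re_ofReal_mul]
    have hFd : Differentiable ℂ F := by
      apply Differentiable.mul
      · exact (Complex.differentiable_exp.comp
          ((differentiable_const _).mul ((differentiable_const _).mul differentiable_id)))
      · exact hf.comp ((differentiable_const _).mul differentiable_id)
    have hmain : ‖F (-I * z)‖ ≤ M := by
      apply PhragmenLindelof.right_half_plane_of_bounded_on_real hFd.diffContOnCl
      · refine ⟨1, one_lt_two, |κ + ε| + (κ + ε), ?_⟩
        refine Asymptotics.IsBigO.of_bound C (Eventually.of_forall fun w => ?_)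
        rw [hFn]
        have h1 : ‖f (I * w)‖ ≤ C * Real.exp ((κ + ε) * ‖w‖) := by
          have := hCb (I * w)
          simpa using this
        have h2 : Real.exp (-(κ + ε) * w.re) ≤ Real.exp (|κ + ε| * ‖w‖) := by
          apply Real.exp_le_exp.2
          calc -(κ + ε) * w.re ≤ |(-(κ + ε)) * w.re| := le_abs_self _
            _ = |κ + ε| * |w.re| := by rw [abs_mul, abs_neg]
            _ ≤ |κ + ε| * ‖w‖ := by
                exact mul_le_mul_of_nonneg_left (Complex.abs_re_le_norm w) (abs_nonneg _)
        calc Real.exp (-(κ + ε) * w.re) * ‖f (I * w)‖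
            ≤ Real.exp (|κ + ε| * ‖w‖) * (C * Real.exp ((κ + ε) * ‖w‖)) := by
              exact mul_le_mul h2 h1 (norm_nonneg _) (Real.exp_nonneg _)
          _ = C * Real.exp ((|κ + ε| + (κ + ε)) * ‖w‖) := by
              rw [mul_left_comm, ← Real.exp_add]; ring_nf
          _ ≤ C * ‖Real.exp ((|κ + ε| + (κ + ε)) * ‖w‖ ^ (1:ℝ))‖ := by
              rw [Real.norm_eq_abs, _root_.abs_of_nonneg (Real.exp_nonneg _), Real.rpow_one]
      · refine ⟨C, ?_⟩
        rw [eventually_map]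
        filter_upwards [eventually_ge_atTop (0:ℝ)] with x hx
        rw [hFn]
        have h1 : ‖f (I * x)‖ ≤ C * Real.exp ((κ + ε) * x) := by
          have := hCb (I * x)
          simpa [_root_.abs_of_nonneg hx] using this
        calc Real.exp (-(κ + ε) * (x:ℂ).re) * ‖f (I * x)‖
            ≤ Real.exp (-(κ + ε) * x) * (C * Real.exp ((κ + ε) * x)) :=
              mul_le_mul_of_nonneg_left (by simpa using h1) (by simp [Real.exp_nonneg])
          _ = C := by rw [← mul_assoc, mul_comm (Real.exp _) C, mul_assoc, ← Real.exp_add]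
                      ring_nf; simp
      · intro x
        rw [hFn]
        have : I * (↑x * I) = ((-x : ℝ) : ℂ) := by push_cast; ring_nf; rw [Complex.I_sq]; ring
        rw [this]
        have hre : ((x:ℂ) * I).re = 0 := by simp
        rw [hre, mul_zero, Real.exp_zero, one_mul]
        exact hbd (-x)
      · simp [hz]
    have heq : I * (-I * z) = z := by ring_nf; rw [Complex.I_sq]; ring
    rw [hFn, heq] at hmain
    have hre2 : (-I * z).re = z.im := by simp
    rw [hre2] at hmain
    have hexp : (0:ℝ) < Real.exp (-(κ + ε) * z.im) := Real.exp_pos _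
    calc ‖f z‖ = (Real.exp (-(κ + ε) * z.im) * ‖f z‖) * Real.exp ((κ + ε) * z.im) := by
          rw [mul_assoc, mul_comm ‖f z‖, ← mul_assoc, ← Real.exp_add]; ring_nf; simp
      _ ≤ M * Real.exp ((κ + ε) * z.im) :=
          mul_le_mul_of_nonneg_right hmain (Real.exp_nonneg _)
  -- take the limit ε → 0⁺
  have hlim : Tendsto (fun ε : ℝ => M * Real.exp ((κ + ε) * z.im)) (nhdsWithin 0 (Ioi 0))
      (nhds (M * Real.exp (κ * z.im))) := by
    apply Tendsto.mono_left _ nhdsWithin_le_nhds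
    have : Continuous (fun ε : ℝ => M * Real.exp ((κ + ε) * z.im)) := by continuity
    simpa using this.tendsto 0
  refine ge_of_tendsto hlim ?_
  filter_upwards [self_mem_nhdsWithin] with ε hε
  exact key ε hε

/-- Phragmén–Lindelöf for Bernstein functions: if `f` is entire of exponential type at most
`κ` and bounded by `M` on the real line, then `|f(z)| ≤ M e^{κ|Im z|}` for every `z ∈ ℂ`. -/
theorem stmt_10 (f : ℂ → ℂ) (hf : Differentiable ℂ f) (κ M : ℝ)
    (htype : ∀ ε > (0 : ℝ), ∃ C > (0 : ℝ), ∀ w : ℂ, ‖f w‖ ≤ C * Real.exp ((κ + ε) * ‖w‖))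
    (hbd : ∀ x : ℝ, ‖f (x : ℂ)‖ ≤ M) (z : ℂ) :
    ‖f z‖ ≤ M * Real.exp (κ * |z.im|) := by
  rcases le_total 0 z.im with h | h
  · rw [_root_.abs_of_nonneg h]
    exact aux_upper f hf κ M htype hbd z h
  · rw [abs_of_nonpos h]
    have := aux_upper (fun w => f (-w)) (hf.comp differentiable_neg) κ M
      (fun ε hε => by
        obtain ⟨C, hC, hCb⟩ := htype ε hε
        exact ⟨C, hC, fun w => by simpa using hCb (-w)⟩)
      (fun x => by simpa using hbd (-x)) (-z) (by simpa using h)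
    simpa using this
end

section
/- Products of lattices give lattices: there exist constants C, C' > 0 (depending only on N and the chosen homogeneous distance) such that for every δ > 0, R > 1, every (δ², R²)-lattice (x_j)_{j∈J} in F and every (δ, R)-lattice (ζ_{j'})_{j'∈J'} in E, the family (ζ_{j'}, x_j)_{(j,j')∈J×J'} is a (Cδ, C'R)-lattice in N for the homogeneous distance. -/
/-- The product on `N = E × F` induced by the imaginary part of a Hermitian map `Φ`. -/
noncomputable def heisMul {E F : Type*} [AddCommGroup E] [AddCommGroup F] [Module ℝ F]
    (Φim : E → E → F) (a b : E × F) : E × F :=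
  (a.1 + b.1, a.2 + b.2 + (2 : ℝ) • Φim a.1 b.1)

/-- `(x_k)` is a `(δ,R)`-lattice for the distance `d` if the balls `B(x_k, δ)` are pairwise
disjoint while the balls `B(x_k, Rδ)` cover the space. -/
def IsLattice {X ι : Type*} (d : X → X → ℝ) (x : ι → X) (δ R : ℝ) : Prop :=
  Pairwise (fun i j => Disjoint {y | d (x i) y < δ} {y | d (x j) y < δ}) ∧
  ∀ y : X, ∃ i, d (x i) y < R * δ

/-!
Both `d(0, ·)` and the gauge `ρ(ζ, x) = ‖ζ‖ + √‖x‖` are continuous, positive off the origin and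
homogeneous of degree one for the dilations `t · (ζ, x) = (tζ, t²x)`; comparing them on the
compact unit sphere of `ρ` gives `c₁ ρ ≤ d(0, ·) ≤ c₂ ρ`. By left invariance `d(a, b)` is
`d(0, w)` for a point `w` whose first coordinate is `b.1 - a.1` and whose second one is
`b.2 - a.2` when `a.1 = b.1`. Hence two lattice points at distance `< c₁ δ` share their `E`
coordinate (the `E`-lattice is `2δ`-separated) and then their `F` coordinate (the `F`-lattice is
`2δ²`-separated), while every point lies within `2 c₂ R δ` of some lattice point.
-/

open Metric

section ParabolicGauge

variable {E F : Type*} [NormedAddCommGroup E] [NormedAddCommGroup F]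

noncomputable def parabolicGauge (p : E × F) : ℝ := ‖p.1‖ + √‖p.2‖

lemma parabolicGauge_nonneg (p : E × F) : 0 ≤ parabolicGauge p :=
  add_nonneg (norm_nonneg _) (Real.sqrt_nonneg _)

lemma parabolicGauge_eq_zero_iff {p : E × F} : parabolicGauge p = 0 ↔ p = 0 := by
  refine ⟨fun hp => ?_, fun hp => by simp [hp, parabolicGauge]⟩
  rw [parabolicGauge, add_eq_zero_iff_of_nonneg (norm_nonneg _) (Real.sqrt_nonneg _),
    norm_eq_zero, Real.sqrt_eq_zero (norm_nonneg _), norm_eq_zero] at hp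
  exact Prod.ext hp.1 hp.2

lemma parabolicGauge_pos {p : E × F} (hp : p ≠ 0) : 0 < parabolicGauge p :=
  (parabolicGauge_nonneg p).lt_of_ne' (parabolicGauge_eq_zero_iff.not.mpr hp)

lemma continuous_parabolicGauge : Continuous (parabolicGauge : E × F → ℝ) :=
  continuous_fst.norm.add (Real.continuous_sqrt.comp continuous_snd.norm)

lemma norm_fst_le_parabolicGauge (p : E × F) : ‖p.1‖ ≤ parabolicGauge p :=
  le_add_of_nonneg_right (Real.sqrt_nonneg _)

lemma sqrt_norm_snd_le_parabolicGauge (p : E × F) : √‖p.2‖ ≤ parabolicGauge p :=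
  le_add_of_nonneg_left (norm_nonneg _)

lemma isCompact_parabolicGauge_eq_one [ProperSpace E] [ProperSpace F] :
    IsCompact {p : E × F | parabolicGauge p = 1} := by
  refine isCompact_of_isClosed_isBounded
    (isClosed_eq continuous_parabolicGauge continuous_const)
    ((isBounded_closedBall (x := (0 : E × F)) (r := 1)).subset fun p hp => ?_)
  have h₁ := (norm_fst_le_parabolicGauge p).trans_eq hp
  have h₂ : ‖p.2‖ ≤ 1 := Real.sqrt_le_one.mp ((sqrt_norm_snd_le_parabolicGauge p).trans_eq hp)
  simpa [Prod.norm_def] using And.intro h₁ h₂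

variable [NormedSpace ℝ E] [NormedSpace ℝ F]

def parabolicDilation (t : ℝ) (p : E × F) : E × F := (t • p.1, t ^ 2 • p.2)

lemma parabolicGauge_dilation {t : ℝ} (ht : 0 ≤ t) (p : E × F) :
    parabolicGauge (parabolicDilation t p) = t * parabolicGauge p := by
  simp only [parabolicGauge, parabolicDilation, norm_smul, norm_pow, Real.norm_of_nonneg ht,
    Real.sqrt_mul (pow_nonneg ht 2), Real.sqrt_sq ht, mul_add]

lemma parabolicDilation_inv_smul {t : ℝ} (ht : t ≠ 0) (p : E × F) :
    parabolicDilation t (parabolicDilation t⁻¹ p) = p := by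
  simp [parabolicDilation, smul_smul, ht]

lemma eq_parabolicGauge_mul_of_homogeneous {f : E × F → ℝ}
    (hf : ∀ t > 0, ∀ p, f (parabolicDilation t p) = t * f p) {p : E × F} (hp : p ≠ 0) :
    parabolicGauge (parabolicDilation (parabolicGauge p)⁻¹ p) = 1 ∧
      f p = parabolicGauge p * f (parabolicDilation (parabolicGauge p)⁻¹ p) := by
  have hρ := parabolicGauge_pos hp
  refine ⟨?_, ?_⟩
  · rw [parabolicGauge_dilation (inv_nonneg.mpr hρ.le), inv_mul_cancel₀ hρ.ne']
  · rw [← hf _ hρ, parabolicDilation_inv_smul hρ.ne']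

lemma exists_parabolicGauge_bounds [ProperSpace E] [ProperSpace F] {f : E × F → ℝ}
    (hf_cont : Continuous f) (hf_pos : ∀ p, p ≠ 0 → 0 < f p)
    (hf_hom : ∀ t > 0, ∀ p, f (parabolicDilation t p) = t * f p) :
    ∃ c₁ > 0, ∃ c₂ > 0, ∀ p, c₁ * parabolicGauge p ≤ f p ∧ f p ≤ c₂ * parabolicGauge p := by
  have hS := isCompact_parabolicGauge_eq_one (E := E) (F := F)
  obtain ⟨c₁, hc₁, hlow⟩ := hS.exists_forall_le' hf_cont.continuousOn
    fun p hp => hf_pos p fun h => by simp [h, parabolicGauge] at hp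
  obtain ⟨M, hM⟩ := hS.exists_bound_of_continuousOn hf_cont.continuousOn
  have hf_zero : f 0 = 0 := by
    have h := hf_hom 2 two_pos 0
    simp only [parabolicDilation, Prod.fst_zero, Prod.snd_zero, smul_zero, Prod.mk_zero_zero] at h
    linarith
  refine ⟨c₁, hc₁, max M 1, by positivity, fun p => ?_⟩
  rcases eq_or_ne p 0 with rfl | hp
  · simp [hf_zero, parabolicGauge]
  obtain ⟨hq, hfp⟩ := eq_parabolicGauge_mul_of_homogeneous hf_hom hp
  have hρ := parabolicGauge_nonneg p
  rw [hfp, mul_comm _ (parabolicGauge p), mul_comm _ (parabolicGauge p)]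
  exact ⟨mul_le_mul_of_nonneg_left (hlow _ hq) hρ, mul_le_mul_of_nonneg_left
    (((le_abs_self _).trans (hM _ hq)).trans (le_max_left _ _)) hρ⟩

end ParabolicGauge

section HeisenbergTranslation

variable {E F : Type*} [AddCommGroup E] [AddCommGroup F] [Module ℝ F]

/- `Φim` is an arbitrary map, so `heisMul Φim` need not be a group law; instead of `a⁻¹ b` we use
explicit `g = heisBase Φim a` and `w = heisOffset Φim a b` with `g · 0 = a` and `g · w = b`. -/
def heisBase (Φim : E → E → F) (a : E × F) : E × F := (a.1, a.2 - (2 : ℝ) • Φim a.1 0)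

def heisOffset (Φim : E → E → F) (a b : E × F) : E × F :=
  (b.1 - a.1, b.2 - a.2 + (2 : ℝ) • Φim a.1 0 - (2 : ℝ) • Φim a.1 (b.1 - a.1))

lemma heisMul_heisBase_zero (Φim : E → E → F) (a : E × F) :
    heisMul Φim (heisBase Φim a) 0 = a := by
  ext <;> simp [heisMul, heisBase]

lemma heisMul_heisBase_heisOffset (Φim : E → E → F) (a b : E × F) :
    heisMul Φim (heisBase Φim a) (heisOffset Φim a b) = b := by
  ext
  · simp [heisMul, heisBase, heisOffset]
  · simp only [heisMul, heisBase, heisOffset]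
    abel

lemma heisOffset_same_fst (Φim : E → E → F) (ζ : E) (x x' : F) :
    heisOffset Φim (ζ, x) (ζ, x') = (0, x' - x) := by
  ext <;> simp [heisOffset]

lemma dist_eq_dist_zero_heisOffset {Φim : E → E → F} {d : E × F → E × F → ℝ}
    (hd_left : ∀ g a b, d (heisMul Φim g a) (heisMul Φim g b) = d a b) (a b : E × F) :
    d a b = d 0 (heisOffset Φim a b) := by
  simpa only [heisMul_heisBase_zero, heisMul_heisBase_heisOffset] using
    hd_left (heisBase Φim a) 0 (heisOffset Φim a b)

end HeisenbergTranslation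

lemma IsLattice.eq_of_dist_lt {V ι : Type*} [NormedAddCommGroup V] [NormedSpace ℝ V]
    {x : ι → V} {δ R : ℝ} (hx : IsLattice (fun a b : V => dist a b) x δ R) {i j : ι}
    (h : dist (x i) (x j) < 2 * δ) : i = j := by
  by_contra hij
  have hδ : 0 < δ := by linarith [dist_nonneg (x := x i) (y := x j)]
  have hballs : ∀ k, {y | dist (x k) y < δ} = ball (x k) δ := fun k => by
    ext; simp [dist_comm]
  have := hx.1 hij
  dsimp only at this
  rw [hballs, hballs, disjoint_ball_ball_iff hδ hδ] at this
  linarith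

lemma pairwise_disjoint_of_separated {X ι : Type*} {d : X → X → ℝ}
    (hd_symm : ∀ a b, d a b = d b a) (hd_tri : ∀ a b c, d a c ≤ d a b + d b c) {x : ι → X}
    {r : ℝ} (hsep : ∀ i j, d (x i) (x j) < 2 * r → i = j) :
    Pairwise fun i j => Disjoint {y | d (x i) y < r} {y | d (x j) y < r} := by
  refine fun i j hij => Set.disjoint_left.mpr fun y (hi : d (x i) y < r) (hj : d (x j) y < r) =>
    hij (hsep i j ?_)
  linarith [hd_tri (x i) y (x j), hd_symm y (x j)]

section ProductLattice

variable {E F : Type*} [NormedAddCommGroup E] [NormedAddCommGroup F] [NormedSpace ℝ F]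
  {Φim : E → E → F} {d : E × F → E × F → ℝ}
  {J J' : Type*} {xj : J → F} {ζj : J' → E} {δ c : ℝ}

lemma prod_eq_of_dist_lt [NormedSpace ℝ E]
    (hd_left : ∀ g a b, d (heisMul Φim g a) (heisMul Φim g b) = d a b)
    (hc : 0 < c) (hlow : ∀ p, c * parabolicGauge p ≤ d 0 p) {RF RE : ℝ}
    (hF : IsLattice (fun a b : F => dist a b) xj (δ ^ 2) RF)
    (hE : IsLattice (fun a b : E => dist a b) ζj δ RE) {p q : J × J'}
    (hpq : d (ζj p.2, xj p.1) (ζj q.2, xj q.1) < c * δ) : p = q := by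
  rw [dist_eq_dist_zero_heisOffset hd_left] at hpq
  set w := heisOffset Φim (ζj p.2, xj p.1) (ζj q.2, xj q.1)
  have hw : parabolicGauge w < δ := lt_of_mul_lt_mul_left ((hlow w).trans_lt hpq) hc.le
  have hδ : 0 < δ := (parabolicGauge_nonneg w).trans_lt hw
  have hE_eq : p.2 = q.2 := hE.eq_of_dist_lt <| by
    have : ‖ζj q.2 - ζj p.2‖ < δ := (norm_fst_le_parabolicGauge w).trans_lt hw
    rw [dist_comm, dist_eq_norm]
    linarith
  have hw₂ : w.2 = xj q.1 - xj p.1 := by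
    simp only [w, hE_eq, heisOffset_same_fst]
  have hF_eq : p.1 = q.1 := hF.eq_of_dist_lt <| by
    have : ‖w.2‖ < δ ^ 2 := (Real.sqrt_lt' hδ).mp ((sqrt_norm_snd_le_parabolicGauge w).trans_lt hw)
    rw [dist_comm, dist_eq_norm, ← hw₂]
    nlinarith
  exact Prod.ext hF_eq hE_eq

lemma exists_prod_dist_lt (hd_left : ∀ g a b, d (heisMul Φim g a) (heisMul Φim g b) = d a b)
    (hc : 0 < c) (hupp : ∀ p, d 0 p ≤ c * parabolicGauge p) {R : ℝ}
    (hF : IsLattice (fun a b : F => dist a b) xj (δ ^ 2) (R ^ 2))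
    (hE : IsLattice (fun a b : E => dist a b) ζj δ R) (y : E × F) :
    ∃ p : J × J', d (ζj p.2, xj p.1) y < 2 * c * R * δ := by
  obtain ⟨j', hj'⟩ := hE.2 y.1
  have hRδ : 0 < R * δ := dist_nonneg.trans_lt hj'
  set z := y.2 + (2 : ℝ) • Φim (ζj j') 0 - (2 : ℝ) • Φim (ζj j') (y.1 - ζj j')
  obtain ⟨j, hj⟩ := hF.2 z
  refine ⟨(j, j'), ?_⟩
  set w := heisOffset Φim (ζj j', xj j) y
  have hw₁ : ‖w.1‖ < R * δ := by
    rw [show w.1 = y.1 - ζj j' from rfl, ← dist_eq_norm']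
    exact hj'
  have hw₂ : √‖w.2‖ < R * δ := by
    rw [show w.2 = z - xj j by simp only [w, z, heisOffset]; abel, Real.sqrt_lt' hRδ,
      ← dist_eq_norm', mul_pow]
    exact hj
  calc d (ζj j', xj j) y = d 0 w := dist_eq_dist_zero_heisOffset hd_left _ _
    _ ≤ c * parabolicGauge w := hupp w
    _ < c * (2 * (R * δ)) := mul_lt_mul_of_pos_left (by unfold parabolicGauge; linarith) hc
    _ = 2 * c * R * δ := by ring

end ProductLattice

theorem stmt_14_general {E F : Type*} [NormedAddCommGroup E] [InnerProductSpace ℂ E]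
    [FiniteDimensional ℂ E] [NormedAddCommGroup F] [InnerProductSpace ℝ F]
    [FiniteDimensional ℝ F]
    (Φim : E → E → F) (d : (E × F) → (E × F) → ℝ)
    (hd_pos : ∀ a b, a ≠ b → 0 < d a b)
    (hd_symm : ∀ a b, d a b = d b a)
    (hd_tri : ∀ a b c, d a c ≤ d a b + d b c)
    (hd_cont : Continuous fun p : (E × F) × (E × F) => d p.1 p.2)
    (hd_left : ∀ g a b, d (heisMul Φim g a) (heisMul Φim g b) = d a b)
    (hd_hom : ∀ t : ℝ, 0 < t → ∀ (ζ : E) (x : F) (ζ' : E) (x' : F),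
      d ((t : ℂ) • ζ, (t ^ 2) • x) ((t : ℂ) • ζ', (t ^ 2) • x') = t * d (ζ, x) (ζ', x')) :
    ∃ C > (0 : ℝ), ∃ C' > (0 : ℝ), ∀ (δ R : ℝ), 0 < δ → 1 < R →
      ∀ {J J' : Type*} (xj : J → F) (ζj : J' → E),
        IsLattice (fun a b : F => dist a b) xj (δ ^ 2) (R ^ 2) →
        IsLattice (fun a b : E => dist a b) ζj δ R →
        IsLattice d (fun p : J × J' => (ζj p.2, xj p.1)) (C * δ) (C' * R) := by
  obtain ⟨c₁, hc₁, c₂, hc₂, hbounds⟩ := exists_parabolicGauge_bounds (f := d 0)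
    (hd_cont.comp (continuous_const.prodMk continuous_id)) (fun p hp => hd_pos 0 p hp.symm)
    fun t ht p => by
      simpa [parabolicDilation, Complex.coe_smul, Prod.mk_zero_zero] using hd_hom t ht 0 0 p.1 p.2
  refine ⟨c₁ / 2, by positivity, 4 * c₂ / c₁, by positivity,
    fun δ R _ _ J J' xj ζj hF hE => ⟨?_, fun y => ?_⟩⟩
  · refine pairwise_disjoint_of_separated hd_symm hd_tri fun p q hpq =>
      prod_eq_of_dist_lt hd_left hc₁ (fun p => (hbounds p).1) hF hE ?_
    linarith
  · obtain ⟨p, hp⟩ := exists_prod_dist_lt hd_left hc₂ (fun p => (hbounds p).2) hF hE y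
    exact ⟨p, hp.trans_eq (by field_simp; ring)⟩

/-- Products of lattices give lattices: there are `C, C' > 0` such that for every `δ > 0`,
`R > 1`, every `(δ², R²)`-lattice `(x_j)` in `F` and every `(δ, R)`-lattice `(ζ_{j'})` in `E`,
the family `(ζ_{j'}, x_j)` is a `(Cδ, C'R)`-lattice in `N = E × F` for the homogeneous
left-invariant distance `d`. -/
theorem stmt_14 {E F : Type*} [NormedAddCommGroup E] [InnerProductSpace ℂ E]
    [FiniteDimensional ℂ E] [NormedAddCommGroup F] [InnerProductSpace ℝ F]
    [FiniteDimensional ℝ F]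
    (Φim : E → E → F) (d : (E × F) → (E × F) → ℝ)
    (hd_self : ∀ a, d a a = 0)
    (hd_pos : ∀ a b, a ≠ b → 0 < d a b)
    (hd_symm : ∀ a b, d a b = d b a)
    (hd_tri : ∀ a b c, d a c ≤ d a b + d b c)
    (hd_cont : Continuous fun p : (E × F) × (E × F) => d p.1 p.2)
    (hd_left : ∀ g a b, d (heisMul Φim g a) (heisMul Φim g b) = d a b)
    (hd_hom : ∀ t : ℝ, 0 < t → ∀ (ζ : E) (x : F) (ζ' : E) (x' : F),
      d ((t : ℂ) • ζ, (t ^ 2) • x) ((t : ℂ) • ζ', (t ^ 2) • x') = t * d (ζ, x) (ζ', x')) :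
    ∃ C > (0 : ℝ), ∃ C' > (0 : ℝ), ∀ (δ R : ℝ), 0 < δ → 1 < R →
      ∀ {J J' : Type*} (xj : J → F) (ζj : J' → E),
        IsLattice (fun a b : F => dist a b) xj (δ ^ 2) (R ^ 2) →
        IsLattice (fun a b : E => dist a b) ζj δ R →
        IsLattice d (fun p : J × J' => (ζj p.2, xj p.1)) (C * δ) (C' * R) :=
  stmt_14_general Φim d hd_pos hd_symm hd_tri hd_cont hd_left hd_hom
end

section
/- If Λ₊ ≠ ∅ then there exists a constant c' > 0 such that for every compact set K' ⊆ Λ₊ (with d(K', ∂Λ₊) > 0), the supporting function satisfies H_{K'}(Φ(ζ,ζ)) ≤ −c' d(K',∂Λ₊) |ζ|² for every ζ ∈ E; in particular ζ ↦ e^{H_{K'}(Φ(ζ,ζ))} belongs to L^q(E) for every q ∈ (0,∞]. -/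
/-!
Nonemptiness of `Λ₊` forces `Q ζ ≠ 0` for `ζ ≠ 0`, so by homogeneity of degree 2 and compactness
of the unit sphere, `‖Q ζ‖ ≥ c ‖ζ‖²`. If `B(λ, r) ⊆ Λ₊`, then `λ - (r/2) Q ζ / ‖Q ζ‖` still pairs
nonnegatively with `Q ζ`, i.e. `⟨λ, Q ζ⟩ ≥ (r/2) ‖Q ζ‖ ≥ (c/2) r ‖ζ‖²`. Taking the supremum over
`-K'` gives a Gaussian bound on `e^{H_{K'}(Q ζ)}`, and Gaussians are integrable for every Haar
measure on a finite-dimensional space, by comparison with a Euclidean model of it.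
-/
open MeasureTheory Metric
open scoped RealInnerProductSpace

theorem integrable_exp_neg_mul_sq_norm_volume {V : Type*} [NormedAddCommGroup V]
    [InnerProductSpace ℝ V] [FiniteDimensional ℝ V] [MeasurableSpace V] [BorelSpace V]
    {b : ℝ} (hb : 0 < b) : Integrable (fun v : V => Real.exp (-b * ‖v‖ ^ 2)) := by
  have h := (GaussianFourier.integrable_cexp_neg_mul_sq_norm_add (V := V) (b := b)
    (by simpa using hb) 0 0).norm
  refine h.congr (ae_of_all _ fun v => ?_)
  simp only [zero_mul, add_zero]
  rw [← Complex.ofReal_pow, ← Complex.ofReal_neg, ← Complex.ofReal_mul, ← Complex.ofReal_exp,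
    Complex.norm_real, Real.norm_of_nonneg (Real.exp_pos _).le]

section Gaussian

variable {E : Type*} [NormedAddCommGroup E] [NormedSpace ℝ E] [FiniteDimensional ℝ E]
  [MeasurableSpace E] [BorelSpace E]

theorem integrable_exp_neg_mul_sq_norm (μ : Measure E) [μ.IsAddHaarMeasure] {b : ℝ}
    (hb : 0 < b) : Integrable (fun x => Real.exp (-b * ‖x‖ ^ 2)) μ := by
  let e := toEuclidean (E := E)
  obtain ⟨C, hC, he⟩ := e.toContinuousLinearMap.bound
  let g := fun y : EuclideanSpace ℝ (Fin (Module.finrank ℝ E)) =>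
    Real.exp (-(b / C ^ 2) * ‖y‖ ^ 2)
  have hg : Integrable g (μ.map e) := by
    rw [Measure.isAddLeftInvariant_eq_smul (μ.map e) volume]
    exact (integrable_exp_neg_mul_sq_norm_volume (by positivity)).smul_measure_nnreal
  rw [integrable_map_measure (by fun_prop) (by fun_prop)] at hg
  refine hg.mono' (by fun_prop) (ae_of_all _ fun x => ?_)
  rw [Real.norm_of_nonneg (Real.exp_pos _).le, Function.comp_apply, Real.exp_le_exp]
  have hx : ‖e x‖ ^ 2 ≤ C ^ 2 * ‖x‖ ^ 2 := by
    rw [← mul_pow]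
    exact pow_le_pow_left₀ (norm_nonneg _) (he x) 2
  calc -b * ‖x‖ ^ 2 = -(b / C ^ 2) * (C ^ 2 * ‖x‖ ^ 2) := by field_simp
    _ ≤ -(b / C ^ 2) * ‖e x‖ ^ 2 := mul_le_mul_of_nonpos_left hx (neg_nonpos.2 (by positivity))

theorem lintegral_ofReal_exp_rpow_lt_top (μ : Measure E) [μ.IsAddHaarMeasure] {f : E → ℝ}
    {a q : ℝ} (ha : 0 < a) (hq : 0 < q) (hf : ∀ x, f x ≤ -(a * ‖x‖ ^ 2)) :
    ∫⁻ x, ENNReal.ofReal (Real.exp (f x) ^ q) ∂μ < ⊤ := by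
  refine lt_of_le_of_lt (lintegral_mono fun x => ENNReal.ofReal_le_ofReal ?_)
    (integrable_exp_neg_mul_sq_norm μ (mul_pos hq ha)).lintegral_lt_top
  rw [← Real.exp_mul, Real.exp_le_exp]
  nlinarith [hf x]

end Gaussian

theorem exists_pos_mul_sq_norm_le_norm {E F : Type*} [NormedAddCommGroup E] [NormedSpace ℝ E]
    [ProperSpace E] [NormedAddCommGroup F] [NormedSpace ℝ F] {Q : E → F} (hQc : Continuous Q)
    (hQh : ∀ t : ℝ, 0 < t → ∀ x, Q (t • x) = t ^ 2 • Q x) (hQ : ∀ x, x ≠ 0 → Q x ≠ 0) :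
    ∃ c > 0, ∀ x, c * ‖x‖ ^ 2 ≤ ‖Q x‖ := by
  obtain ⟨c, hc, hmin⟩ := (isCompact_sphere (0 : E) 1).exists_forall_le' hQc.norm.continuousOn
    (a := 0) fun u hu => norm_pos_iff.2 (hQ u (ne_zero_of_mem_unit_sphere ⟨u, hu⟩))
  refine ⟨c, hc, fun x => ?_⟩
  rcases eq_or_ne x 0 with rfl | hx
  · simp
  have hx' : 0 < ‖x‖ := norm_pos_iff.2 hx
  have hu : ‖x‖⁻¹ • x ∈ sphere (0 : E) 1 := by
    simp [norm_smul, inv_mul_cancel₀ hx'.ne']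
  have hQx : Q x = ‖x‖ ^ 2 • Q (‖x‖⁻¹ • x) := by
    rw [← hQh _ hx', smul_smul, mul_inv_cancel₀ hx'.ne', one_smul]
  rw [hQx, norm_smul, Real.norm_of_nonneg (by positivity), mul_comm]
  exact mul_le_mul_of_nonneg_left (hmin _ hu) (by positivity)

section Inner

variable {F : Type*} [NormedAddCommGroup F] [InnerProductSpace ℝ F]

theorem mul_norm_le_inner_of_forall_mem_closedBall {lam v : F} {r : ℝ} (hr : 0 ≤ r)
    (h : ∀ μ ∈ closedBall lam r, 0 ≤ ⟪μ, v⟫) : r * ‖v‖ ≤ ⟪lam, v⟫ := by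
  rcases eq_or_ne v 0 with rfl | hv
  · simp
  have hv' : 0 < ‖v‖ := norm_pos_iff.2 hv
  have hμ := h (lam - (r / ‖v‖) • v) (by
    rw [mem_closedBall, dist_eq_norm, sub_sub_cancel_left, norm_neg, norm_smul,
      Real.norm_of_nonneg (by positivity), div_mul_cancel₀ _ hv'.ne'])
  rw [inner_sub_left, real_inner_smul_left, real_inner_self_eq_norm_sq] at hμ
  have : r / ‖v‖ * ‖v‖ ^ 2 = r * ‖v‖ := by field_simp
  linarith

theorem sSup_inner_image_neg_le {K : Set F} (hK : K.Nonempty) {v : F} {a : ℝ}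
    (h : ∀ lam ∈ K, a ≤ ⟪lam, v⟫) : sSup ((fun μ => ⟪μ, v⟫) '' (-K)) ≤ -a := by
  refine csSup_le (hK.neg.image _) ?_
  rintro _ ⟨μ, hμ, rfl⟩
  have := h (-μ) hμ
  rw [inner_neg_left] at this
  linarith

end Inner

/-- If `Λ₊ ≠ ∅`, there is `c' > 0` such that for every nonempty compact `K' ⊆ Λ₊` at distance
at least `r > 0` from `∂Λ₊` (i.e. all balls `B(λ, r)`, `λ ∈ K'`, stay in `Λ₊`), the supporting
function satisfies `H_{K'}(Q ζ) ≤ -c' r ‖ζ‖²` for every `ζ ∈ E`; in particular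
`ζ ↦ e^{H_{K'}(Q ζ)}` belongs to `L^q(E)` for every `q ∈ (0,∞]`. Here `Q ζ = Φ(ζ,ζ)` is the
quadratic part of the Hermitian map `Φ`. -/
theorem stmt_15 {n m : ℕ} (Q : (Fin n → ℂ) → EuclideanSpace ℝ (Fin m))
    (hQc : Continuous Q)
    (hQh : ∀ (c : ℂ) (ζ : Fin n → ℂ), Q (c • ζ) = (‖c‖ ^ 2 : ℝ) • Q ζ)
    (hne : {lam : EuclideanSpace ℝ (Fin m) |
      ∀ ζ : Fin n → ℂ, ζ ≠ 0 → 0 < (inner ℝ lam (Q ζ) : ℝ)}.Nonempty) :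
    ∃ c' > (0 : ℝ), ∀ K' : Set (EuclideanSpace ℝ (Fin m)), IsCompact K' → K'.Nonempty →
      ∀ r > (0 : ℝ),
      (∀ lam ∈ K', Metric.ball lam r ⊆ {lam : EuclideanSpace ℝ (Fin m) |
          ∀ ζ : Fin n → ℂ, ζ ≠ 0 → 0 < (inner ℝ lam (Q ζ) : ℝ)}) →
      (∀ ζ : Fin n → ℂ,
        sSup ((fun μ => (inner ℝ μ (Q ζ) : ℝ)) '' (-K')) ≤ -(c' * r * ‖ζ‖ ^ 2)) ∧
      (∀ q : ℝ, 0 < q →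
        (∫⁻ ζ : Fin n → ℂ, ENNReal.ofReal
          (Real.exp (sSup ((fun μ => (inner ℝ μ (Q ζ) : ℝ)) '' (-K'))) ^ q)) < ⊤) ∧
      BddAbove (Set.range fun ζ : Fin n → ℂ =>
        Real.exp (sSup ((fun μ => (inner ℝ μ (Q ζ) : ℝ)) '' (-K')))) := by
  obtain ⟨lam₀, hlam₀⟩ := hne
  have hQ0 : Q 0 = 0 := by simpa using hQh 0 0
  have hQ : ∀ ζ, ζ ≠ 0 → Q ζ ≠ 0 := fun ζ hζ h => by simpa [h] using hlam₀ ζ hζ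
  have hQh' : ∀ t : ℝ, 0 < t → ∀ ζ, Q (t • ζ) = t ^ 2 • Q ζ := fun t _ ζ => by
    simpa [Complex.coe_smul] using hQh t ζ
  obtain ⟨c, hc, hlow⟩ := exists_pos_mul_sq_norm_le_norm hQc hQh' hQ
  refine ⟨c / 2, by positivity, fun K' _ hK' r hr hball => ?_⟩
  have hH : ∀ ζ, sSup ((fun μ => ⟪μ, Q ζ⟫) '' (-K')) ≤ -(c / 2 * r * ‖ζ‖ ^ 2) := by
    refine fun ζ => sSup_inner_image_neg_le hK' fun lam hlam => ?_
    have hpos : ∀ μ ∈ closedBall lam (r / 2), 0 ≤ ⟪μ, Q ζ⟫ := by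
      intro μ hμ
      rcases eq_or_ne ζ 0 with rfl | hζ
      · simp [hQ0]
      · exact (hball lam hlam (closedBall_subset_ball (half_lt_self hr) hμ) ζ hζ).le
    calc c / 2 * r * ‖ζ‖ ^ 2 = r / 2 * (c * ‖ζ‖ ^ 2) := by ring
      _ ≤ r / 2 * ‖Q ζ‖ := by gcongr; exact hlow ζ
      _ ≤ ⟪lam, Q ζ⟫ := mul_norm_le_inner_of_forall_mem_closedBall (by positivity) hpos
  refine ⟨hH, fun q hq => lintegral_ofReal_exp_rpow_lt_top _ (by positivity) hq hH, 1, ?_⟩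
  rintro _ ⟨ζ, rfl⟩
  exact Real.exp_le_one_iff.2 ((hH ζ).trans (neg_nonpos.2 (by positivity)))
end
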